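/- arXiv:1412.3327 — 5 statements merged into one kernel-verified Lean document; each statement's English description precedes it below -/
import Mathlib

section
/- Let V be a finite-dimensional rational vector space of dimension r, let C = {v ∈ V⊗ℝ : α₁(v)>0, …, α_r(v)>0} be a sharp rational open cone defined by linearly independent linear functionals α₁,…,α_r ∈ Hom(V,ℚ), and let Σ ⊂ V be a lattice (a finitely generated subgroup spanning V). Then there exist a finite subset E ⊂ Σ and elements a₁,…,a_r ∈ Σ such that every element of C ∩ Σ can be written uniquely as v₀ + ν₁a₁ + ⋯ + ν_r a_r with v₀ ∈ E and ν₁,…,ν_r ∈ ℕ₀. -/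
/-!
In the basis `b` of `V` dual to `α₁, …, α_r` the cone is the positive orthant. Since `Σ` spans
`V`, some multiple `aⱼ = nⱼ bⱼ` by a positive integer `nⱼ` lies in `Σ`. For `v ∈ C ∩ Σ` the
exponents are forced: `νⱼ` is the unique natural number with `αⱼ v - νⱼ nⱼ ∈ (0, nⱼ]`, and then
`v₀ = v - ∑ νⱼ aⱼ` lies in the set `E` of points of `Σ` whose coordinates lie in the box
`∏ (0, nⱼ]`. This set is finite because the coordinates of the finitely many generators of `Σ`,
hence of all of `Σ`, have a common denominator.
-/

open Module Set

theorem AddSubgroup.FG.map {G H : Type*} [AddGroup G] [AddGroup H] {L : AddSubgroup G}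
    (hL : L.FG) (f : G →+ H) : (L.map f).FG := by
  classical
  obtain ⟨S, rfl⟩ := hL
  exact ⟨S.image f, by rw [Finset.coe_image, AddMonoidHom.map_closure]⟩

theorem AddSubgroup.FG.exists_le_zmultiples_inv {H : AddSubgroup ℚ} (hH : H.FG) :
    ∃ m : ℕ, 0 < m ∧ H ≤ AddSubgroup.zmultiples (m : ℚ)⁻¹ := by
  obtain ⟨S, rfl⟩ := hH
  refine ⟨∏ s ∈ S, s.den, Finset.prod_pos fun s _ => s.den_pos,
    (AddSubgroup.closure_le _).2 fun s hs => ?_⟩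
  obtain ⟨k, hk⟩ := Finset.dvd_prod_of_mem Rat.den hs
  refine ⟨s.num * k, ?_⟩
  have hk0 : (k : ℚ) ≠ 0 := Nat.cast_ne_zero.2 <|
    right_ne_zero_of_mul (hk ▸ (Finset.prod_pos fun (s : ℚ) _ => s.den_pos).ne')
  show (s.num * k : ℤ) • ((∏ s ∈ S, s.den : ℕ) : ℚ)⁻¹ = s
  rw [hk, zsmul_eq_mul]
  push_cast
  field_simp
  exact_mod_cast (Rat.den_mul_eq_num s).symm

theorem AddSubgroup.FG.finite_inter_Icc {H : AddSubgroup ℚ} (hH : H.FG) (a b : ℚ) :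
    ((H : Set ℚ) ∩ Icc a b).Finite := by
  obtain ⟨m, hm, hle⟩ := hH.exists_le_zmultiples_inv
  have hm' : (0 : ℚ) < m := by exact_mod_cast hm
  refine ((finite_Icc ⌈a * m⌉ ⌊b * m⌋).image fun k : ℤ => k • (m : ℚ)⁻¹).subset ?_
  rintro x ⟨hx, hax, hxb⟩
  obtain ⟨k, rfl⟩ := AddSubgroup.mem_zmultiples_iff.1 (hle hx)
  rw [zsmul_eq_mul, ← div_eq_mul_inv] at hax hxb
  exact ⟨k, ⟨Int.ceil_le.2 ((le_div_iff₀ hm').1 hax), Int.le_floor.2 ((div_le_iff₀ hm').1 hxb)⟩,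
    rfl⟩

theorem AddSubgroup.exists_nsmul_mem_of_mem_span_rat {V : Type*} [AddCommGroup V] [Module ℚ V]
    {L : AddSubgroup V} {v : V} (hv : v ∈ Submodule.span ℚ (L : Set V)) :
    ∃ n : ℕ, 0 < n ∧ n • v ∈ L := by
  induction hv using Submodule.span_induction with
  | mem x hx => exact ⟨1, one_pos, by rwa [one_nsmul]⟩
  | zero => exact ⟨1, one_pos, by rw [smul_zero]; exact L.zero_mem⟩
  | add x y _ _ hx hy =>
    obtain ⟨n, hn, hnx⟩ := hx
    obtain ⟨m, hm, hmy⟩ := hy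
    refine ⟨n * m, Nat.mul_pos hn hm, ?_⟩
    rw [smul_add, mul_smul, mul_smul, smul_comm n m x]
    exact L.add_mem (L.nsmul_mem hnx m) (L.nsmul_mem hmy n)
  | smul q x _ hx =>
    obtain ⟨n, hn, hnx⟩ := hx
    refine ⟨n * q.den, Nat.mul_pos hn q.den_pos, ?_⟩
    have h : (n * q.den) • q • x = q.num • n • x := by
      rw [← Nat.cast_smul_eq_nsmul ℚ, ← Nat.cast_smul_eq_nsmul ℚ, ← Int.cast_smul_eq_zsmul ℚ,
        smul_smul, smul_smul]
      congr 1
      push_cast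
      rw [mul_assoc, Rat.den_mul_eq_num, mul_comm]
    rw [h]
    exact L.zsmul_mem hnx _

theorem exists_basis_coord_eq {K V ι : Type*} [Field K] [AddCommGroup V] [Module K V]
    [FiniteDimensional K V] [Fintype ι] {α : ι → Dual K V} (hα : LinearIndependent K α)
    (hcard : Fintype.card ι = finrank K V) : ∃ B : Basis ι K V, B.coord = α := by
  classical
  let A := basisOfLinearIndependentOfCardEqFinrank' α hα (by rwa [Subspace.dual_finrank_eq])
  let B := A.dualBasis.map (evalEquiv K V).symm
  refine ⟨B, funext fun i => B.ext fun j => ?_⟩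
  have hαA : α i = A i := by simp [A]
  rw [B.coord_apply, B.repr_self, Finsupp.single_apply, Basis.map_apply,
    apply_evalEquiv_symm_apply, hαA, A.dualBasis_apply_self]
  exact if_congr eq_comm rfl rfl

theorem existsUnique_sub_nsmul_mem_Ioc {G : Type*} [AddCommGroup G] [LinearOrder G]
    [IsOrderedAddMonoid G] [Archimedean G] {a b : G} (ha : 0 < a) (hb : 0 < b) :
    ∃! k : ℕ, b - k • a ∈ Ioc 0 a := by
  obtain ⟨m, hm, huniq⟩ := existsUnique_sub_zsmul_mem_Ioc ha b 0
  rw [zero_add] at hm huniq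
  have hm0 : 0 ≤ m := by
    by_contra! h
    have : m • a ≤ (-1 : ℤ) • a := zsmul_le_zsmul_left ha.le (by omega)
    rw [neg_one_zsmul] at this
    refine hm.2.not_gt ?_
    calc a < b + a := lt_add_of_pos_left a hb
      _ ≤ b - m • a := by rw [sub_eq_add_neg]; gcongr; exact le_neg.1 this
  lift m to ℕ using hm0
  refine ⟨m, by simpa [natCast_zsmul] using hm, fun k hk => ?_⟩
  exact_mod_cast huniq k (by simpa [natCast_zsmul] using hk)

def latticeBox {K V ι : Type*} [Semiring K] [Preorder K] [AddCommGroup V] [Module K V]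
    (B : Basis ι K V) (L : AddSubgroup V) (c : ι → K) : Set V :=
  {x | x ∈ L ∧ ∀ j, B.coord j x ∈ Ioc 0 (c j)}

theorem finite_latticeBox {V ι : Type*} [AddCommGroup V] [Module ℚ V] [Finite ι]
    (B : Basis ι ℚ V) {L : AddSubgroup V} (hL : L.FG) (c : ι → ℚ) :
    (latticeBox B L c).Finite := by
  have hbox : (univ.pi fun j => (L.map (B.coord j).toAddMonoidHom : Set ℚ) ∩ Icc 0 (c j)).Finite :=
    Finite.pi fun j => (hL.map _).finite_inter_Icc 0 (c j)
  refine (hbox.preimage B.equivFun.injective.injOn).subset ?_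
  rintro x ⟨hx, hxc⟩ j -
  exact ⟨⟨x, hx, rfl⟩, Ioc_subset_Icc_self (hxc j)⟩

theorem Module.Basis.coord_sum_nsmul_smul {K V ι : Type*} [Semiring K] [AddCommGroup V]
    [Module K V] [Fintype ι] (B : Basis ι K V) (μ : ι → ℕ) (c : ι → K) (i : ι) :
    B.coord i (∑ j, μ j • c j • B j) = μ i • c i := by
  simp_rw [← smul_assoc, ← B.equivFun_symm_apply, B.coord_equivFun_symm]

theorem mem_and_coord_pos_iff_existsUnique {K V ι : Type*} [Ring K] [LinearOrder K]
    [IsOrderedRing K] [Archimedean K] [AddCommGroup V] [Module K V] [Fintype ι]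
    (B : Basis ι K V) (L : AddSubgroup V) {c : ι → K} (hc : ∀ j, 0 < c j)
    (hcL : ∀ j, c j • B j ∈ L) (v : V) :
    (v ∈ L ∧ ∀ i, 0 < B.coord i v) ↔
      ∃! p : V × (ι → ℕ), p.1 ∈ latticeBox B L c ∧ v = p.1 + ∑ j, p.2 j • c j • B j := by
  have hsum_mem (μ : ι → ℕ) : ∑ j, μ j • c j • B j ∈ L :=
    L.sum_mem fun j _ => L.nsmul_mem (hcL j) _
  constructor
  · rintro ⟨hv, hpos⟩
    choose ν hν hν_unique using fun j => existsUnique_sub_nsmul_mem_Ioc (hc j) (hpos j)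
    have hdecomp : v = (v - ∑ j, ν j • c j • B j) + ∑ j, ν j • c j • B j :=
      (sub_add_cancel _ _).symm
    refine ⟨(v - ∑ j, ν j • c j • B j, ν), ⟨⟨L.sub_mem hv (hsum_mem ν), fun j => ?_⟩, hdecomp⟩, ?_⟩
    · rw [map_sub, B.coord_sum_nsmul_smul]
      exact hν j
    · rintro ⟨w, μ⟩ ⟨⟨-, hw⟩, hvw⟩
      obtain rfl : μ = ν := funext fun j => hν_unique j (μ j) (by
        dsimp only at hvw ⊢
        rw [hvw, map_add, B.coord_sum_nsmul_smul, add_sub_cancel_right]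
        exact hw j)
      rw [hvw, add_sub_cancel_right]
  · rintro ⟨⟨w, μ⟩, ⟨⟨hw, hwc⟩, rfl⟩, -⟩
    refine ⟨L.add_mem hw (hsum_mem μ), fun i => ?_⟩
    rw [map_add, B.coord_sum_nsmul_smul]
    exact add_pos_of_pos_of_nonneg (hwc i).1 (nsmul_nonneg (hc i).le _)

/-- Cone decomposition lemma: Let `V` be a `ℚ`-vector space of dimension `r`,
let `C = {v : ∀ i, 0 < αᵢ v}` be a sharp rational open cone given by linearly
independent functionals `α₁, …, α_r ∈ Hom(V, ℚ)`, and let `Sig ⊆ V` be a lattice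
(a finitely generated subgroup spanning `V`).  Then there are a finite set
`E ⊆ Sig` and elements `a₁, …, a_r ∈ Sig` such that `C ∩ Sig` is exactly the set
of elements of the form `v₀ + ν₁ a₁ + ⋯ + ν_r a_r` with `v₀ ∈ E` and
`ν_j ∈ ℕ`, and this representation is unique. -/
theorem stmt1 {V : Type*} [AddCommGroup V] [Module ℚ V] (r : ℕ)
    [FiniteDimensional ℚ V] (hr : Module.finrank ℚ V = r)
    (α : Fin r → (V →ₗ[ℚ] ℚ)) (hα : LinearIndependent ℚ α)
    (Sig : AddSubgroup V) (hfg : Sig.FG)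
    (hspan : Submodule.span ℚ (Sig : Set V) = ⊤) :
    ∃ (E : Finset V) (a : Fin r → V), (↑E : Set V) ⊆ (Sig : Set V) ∧
      (∀ j, a j ∈ Sig) ∧
      ∀ v : V, (v ∈ Sig ∧ ∀ i, 0 < α i v) ↔
        ∃! p : V × (Fin r → ℕ), p.1 ∈ E ∧ v = p.1 + ∑ j, p.2 j • a j := by
  obtain ⟨B, rfl⟩ := exists_basis_coord_eq hα (by rw [Fintype.card_fin, hr])
  choose n hn hnSig using fun j =>
    AddSubgroup.exists_nsmul_mem_of_mem_span_rat (by rw [hspan]; exact Submodule.mem_top : B j ∈ _)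
  have hc : ∀ j, (0 : ℚ) < n j := fun j => by exact_mod_cast hn j
  have hcSig : ∀ j, (n j : ℚ) • B j ∈ Sig := fun j => by rw [Nat.cast_smul_eq_nsmul]; exact hnSig j
  have hE := finite_latticeBox B hfg fun j => (n j : ℚ)
  refine ⟨hE.toFinset, fun j => (n j : ℚ) • B j, fun x hx => (hE.mem_toFinset.1 hx).1, hcSig,
    fun v => ?_⟩
  simpa only [hE.mem_toFinset] using mem_and_coord_pos_iff_existsUnique B Sig hc hcSig v
end

section
/- In the setting of the cone decomposition lemma: with a_j ∈ Σ chosen so that α_i(a_j) = 0 for i ≠ j and α_j(a_j) > 0 minimal, and E a set of coset representatives of Σ/Σ' (Σ' the subgroup generated by a₁,…,a_r) chosen inside C with each v₀ − a_j outside C, any v ∈ C ∩ Σ written as v = v₀ + ν₁a₁ + ⋯ + ν_r a_r with v₀ ∈ E, ν_j ∈ ℤ, necessarily has all ν_j ≥ 0. -/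
/-- In the setting of the cone decomposition lemma: with `a_j ∈ Σ` chosen so
that `α_i (a_j) = 0` for `i ≠ j` and `α_j (a_j) > 0`, and `E` a set of coset
representatives chosen inside the cone `C = {v | ∀ i, 0 < α_i v}` with each
`v₀ - a_j` outside `C`, any `v ∈ C ∩ Σ` written as
`v = v₀ + ν₁ a₁ + ⋯ + ν_r a_r` with `v₀ ∈ E` and `ν_j ∈ ℤ` necessarily has
all `ν_j ≥ 0`. -/
theorem stmt2 {V : Type*} [AddCommGroup V] [Module ℚ V] (r : ℕ)
    (α : Fin r → (V →ₗ[ℚ] ℚ)) (hα : LinearIndependent ℚ α)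
    (Sig : AddSubgroup V)
    (a : Fin r → V) (haS : ∀ j, a j ∈ Sig)
    (ha0 : ∀ i j, i ≠ j → α i (a j) = 0) (hapos : ∀ j, 0 < α j (a j))
    (E : Set V) (hES : E ⊆ (Sig : Set V))
    (hEC : ∀ v₀ ∈ E, ∀ i, 0 < α i v₀)
    (hEout : ∀ v₀ ∈ E, ∀ j, ¬ (∀ i, 0 < α i (v₀ - a j)))
    (v : V) (hvS : v ∈ Sig) (hvC : ∀ i, 0 < α i v)
    (v₀ : V) (hv₀ : v₀ ∈ E) (ν : Fin r → ℤ)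
    (hv : v = v₀ + ∑ j, ν j • a j) :
    ∀ j, 0 ≤ ν j := by
  intro j
  by_contra hneg
  push_neg at hneg
  have key : α j v = α j v₀ + (ν j : ℚ) * α j (a j) := by
    rw [hv, map_add, map_sum]
    congr 1
    rw [Finset.sum_eq_single j]
    · simp
    · intro i _ hij
      rw [map_zsmul, ha0 j i (Ne.symm hij), smul_zero]
    · simp
  apply hEout v₀ hv₀ j
  intro i
  rw [map_sub]
  rcases eq_or_ne i j with rfl | hij
  · have hν : (ν i : ℚ) ≤ -1 := by
      have h2 : ν i ≤ -1 := by omega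
      exact_mod_cast h2
    have h1 : α i v₀ = α i v - (ν i : ℚ) * α i (a i) := by linarith [key]
    nlinarith [hvC i, hapos i]
  · rw [ha0 i j hij]
    simpa using hEC v₀ hv₀ i
end

section
/- Let G be a group acting on a set, Γ ≤ G a subgroup, γ ∈ Γ, K ≤ G a subgroup, and Γ_γ, G_γ the centralizers of γ in Γ and G respectively. Then the natural projection K\G/Γ_γ → K\G/G_γ is surjective, and for each fiber over a class KxG_γ, the fiber is in bijection with a quotient of G_γ/Γ_γ; in particular if the sets are finite, |{x ∈ K\G/Γ_γ : xγx⁻¹ ∈ S}| = Σ over classes in K\G/G_γ with xγx⁻¹ ∈ S of the corresponding fiber cardinalities, for any conjugation-stable set S = KA⁻K. -/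
open scoped Pointwise

/-!
Enlarging the right subgroup from `Γ_γ` to `G_γ` coarsens the double coset partition, so the
projection is surjective and its fibre over `K x G_γ` is the image of `c ↦ K x c Γ_γ`, `c ∈ G_γ`.
Since `(k x c) γ (k x c)⁻¹ = k (x γ x⁻¹) k⁻¹` for `c ∈ G_γ`, membership of
`x γ x⁻¹` in a bi-`K`-stable set only depends on the class in `K\G/G_γ`; the count is then the
cardinality of a disjoint union of fibres.
-/

theorem Nat.card_subtype_eq_finsum_mem_card_fiber {α β : Type*} [Finite α] [Finite β]
    (f : α → β) {p : α → Prop} {q : β → Prop} (h : ∀ x, p x ↔ q (f x)) :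
    Nat.card (Subtype p) = ∑ᶠ y ∈ {y | q y}, Nat.card {x // f x = y} := by
  have : Fintype (Subtype q) := Fintype.ofFinite _
  rw [← Nat.card_congr (Equiv.sigmaSubtypeFiberEquivSubtype f h), Nat.card_sigma,
    ← finsum_eq_sum_of_fintype]
  exact finsum_set_coe_eq_finsum_mem (f := fun y => Nat.card {x // f x = y}) {y | q y}

namespace DoubleCoset

variable {G : Type*} [Group G] (K : Subgroup G) {H H' : Subgroup G} (hle : H ≤ H')

def quotientMapOfLE : Quotient (K : Set G) (H : Set G) → Quotient (K : Set G) (H' : Set G) :=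
  Quotient.map' id fun a b hab => by
    obtain ⟨k, hk, c, hc, rfl⟩ := rel_iff.mp hab
    exact rel_iff.mpr ⟨k, hk, c, hle hc, rfl⟩

@[simp]
theorem quotientMapOfLE_mk (g : G) : quotientMapOfLE K hle (mk K H g) = mk K H' g :=
  rfl

theorem quotientMapOfLE_surjective : Function.Surjective (quotientMapOfLE K hle) := by
  intro y
  exact ⟨mk K H y.out, by rw [quotientMapOfLE_mk, out_eq']⟩

theorem quotientMapOfLE_mk_mul (g : G) (c : H') :
    quotientMapOfLE K hle (mk K H (g * c)) = mk K H' g := by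
  rw [quotientMapOfLE_mk, eq]
  exact ⟨1, K.one_mem, (c : G)⁻¹, H'.inv_mem c.2, by group⟩

def cosetToFiber (g : G) :
    H' ⧸ H.subgroupOf H' → {x // quotientMapOfLE K hle x = mk K H' g} :=
  Quotient.lift (fun c => ⟨mk K H (g * c), quotientMapOfLE_mk_mul K hle g c⟩) fun a b hab => by
    have hab : (a : G)⁻¹ * b ∈ H :=
      Subgroup.mem_subgroupOf.mp (QuotientGroup.leftRel_apply.mp hab)
    exact Subtype.ext ((eq K H _ _).mpr ⟨1, K.one_mem, (a : G)⁻¹ * b, hab, by group⟩)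

theorem cosetToFiber_surjective (g : G) : Function.Surjective (cosetToFiber K hle g) := by
  rintro ⟨x, hx⟩
  obtain ⟨g', rfl⟩ := Quotient.mk''_surjective x
  obtain ⟨k, hk, c, hc, hg'⟩ := (eq K H' g g').mp hx.symm
  refine ⟨QuotientGroup.mk ⟨c, hc⟩, Subtype.ext ?_⟩
  show mk K H (g * c) = mk K H g'
  rw [hg', eq]
  exact ⟨k, hk, 1, H.one_mem, by group⟩

theorem exists_mk_eq_and_iff {P : G → Prop}
    (hP : ∀ g, ∀ k ∈ K, ∀ c ∈ H', P g → P (k * g * c))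
    (x : Quotient (K : Set G) (H : Set G)) :
    (∃ g, mk K H g = x ∧ P g) ↔ ∃ g, mk K H' g = quotientMapOfLE K hle x ∧ P g := by
  obtain ⟨g₀, rfl⟩ := Quotient.mk''_surjective x
  refine ⟨fun ⟨g, hg, hPg⟩ => ⟨g, by rw [← hg, quotientMapOfLE_mk], hPg⟩, ?_⟩
  rintro ⟨g, hg, hPg⟩
  obtain ⟨k, hk, c, hc, rfl⟩ := (eq K H' g g₀).mp hg
  exact ⟨_, rfl, hP g k hk c hc hPg⟩

end DoubleCoset

theorem conj_mem_of_mem_centralizer {G : Type*} [Group G] {K : Subgroup G} {S : Set G}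
    (hS : ∀ k ∈ K, ∀ k' ∈ K, ∀ s ∈ S, k * s * k' ∈ S) {γ g k c : G} (hk : k ∈ K)
    (hc : c ∈ Subgroup.centralizer {γ}) (hg : g * γ * g⁻¹ ∈ S) :
    k * g * c * γ * (k * g * c)⁻¹ ∈ S := by
  have hcγ : c * γ = γ * c := (Subgroup.mem_centralizer_iff.mp hc γ rfl).symm
  have : k * g * c * γ * (k * g * c)⁻¹ = k * (g * γ * g⁻¹) * k⁻¹ := by
    rw [mul_assoc (k * g), hcγ]
    group
  rw [this]
  exact hS k hk k⁻¹ (K.inv_mem hk) _ hg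

open DoubleCoset in
theorem stmt8_general {G : Type*} [Group G] (K Γ : Subgroup G) (γ : G)
    (S : Set G) (hS : ∀ k ∈ K, ∀ k' ∈ K, ∀ s ∈ S, k * s * k' ∈ S) :
    ∃ φ : DoubleCoset.Quotient (K : Set G) ((Γ ⊓ Subgroup.centralizer {γ} : Subgroup G) : Set G) →
        DoubleCoset.Quotient (K : Set G) ((Subgroup.centralizer {γ} : Subgroup G) : Set G),
      (∀ g : G, φ (DoubleCoset.mk K (Γ ⊓ Subgroup.centralizer {γ}) g)
          = DoubleCoset.mk K (Subgroup.centralizer {γ}) g) ∧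
      Function.Surjective φ ∧
      (∀ y, ∃ f : (Subgroup.centralizer {γ} : Subgroup G) ⧸
            ((Γ ⊓ Subgroup.centralizer {γ}).subgroupOf (Subgroup.centralizer {γ})) →
            {x // φ x = y}, Function.Surjective f) ∧
      (∀ _ : Finite (DoubleCoset.Quotient (K : Set G)
            ((Γ ⊓ Subgroup.centralizer {γ} : Subgroup G) : Set G)),
        Nat.card {x : DoubleCoset.Quotient (K : Set G)
            ((Γ ⊓ Subgroup.centralizer {γ} : Subgroup G) : Set G) //
            ∃ g : G, DoubleCoset.mk K (Γ ⊓ Subgroup.centralizer {γ}) g = x ∧ g * γ * g⁻¹ ∈ S}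
          = ∑ᶠ y ∈ {y : DoubleCoset.Quotient (K : Set G)
              ((Subgroup.centralizer {γ} : Subgroup G) : Set G) |
              ∃ g : G, DoubleCoset.mk K (Subgroup.centralizer {γ}) g = y ∧ g * γ * g⁻¹ ∈ S},
              Nat.card {x // φ x = y}) := by
  have hle : Γ ⊓ Subgroup.centralizer {γ} ≤ Subgroup.centralizer {γ} := inf_le_right
  refine ⟨quotientMapOfLE K hle, quotientMapOfLE_mk K hle, quotientMapOfLE_surjective K hle,
    fun y => ?_, fun _ => ?_⟩
  · obtain ⟨g, rfl⟩ := Quotient.mk''_surjective y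
    exact ⟨cosetToFiber K hle g, cosetToFiber_surjective K hle g⟩
  · have : Finite (DoubleCoset.Quotient (K : Set G) (Subgroup.centralizer {γ} : Set G)) :=
      Finite.of_surjective _ (quotientMapOfLE_surjective K hle)
    exact Nat.card_subtype_eq_finsum_mem_card_fiber _ (exists_mk_eq_and_iff K hle
      fun _ _ hk _ hc hg => conj_mem_of_mem_centralizer hS hk hc hg)

/-- Let `G` be a group, `Γ ≤ G` a subgroup, `γ ∈ Γ`, `K ≤ G` a subgroup, and
let `Γ_γ`, `G_γ` denote the centralizers of `γ` in `Γ` and `G` respectively.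
Then the natural projection `K\G/Γ_γ → K\G/G_γ` is surjective, each fiber is
in bijection with a quotient of `G_γ/Γ_γ` (i.e. receives a surjection from
`G_γ/Γ_γ`), and for every left-and-right `K`-stable subset `S ⊆ G` (such as
`S = K A⁻ K`), if `K\G/Γ_γ` is finite then
`|{x ∈ K\G/Γ_γ : xγx⁻¹ ∈ S}|` equals the sum over the classes
`y ∈ K\G/G_γ` with `yγy⁻¹ ∈ S` of the cardinalities of the fibers over `y`. -/
theorem stmt8 {G : Type*} [Group G] (K Γ : Subgroup G) (γ : G) (hγ : γ ∈ Γ)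
    (S : Set G) (hS : ∀ k ∈ K, ∀ k' ∈ K, ∀ s ∈ S, k * s * k' ∈ S) :
    ∃ φ : DoubleCoset.Quotient (K : Set G) ((Γ ⊓ Subgroup.centralizer {γ} : Subgroup G) : Set G) →
        DoubleCoset.Quotient (K : Set G) ((Subgroup.centralizer {γ} : Subgroup G) : Set G),
      (∀ g : G, φ (DoubleCoset.mk K (Γ ⊓ Subgroup.centralizer {γ}) g)
          = DoubleCoset.mk K (Subgroup.centralizer {γ}) g) ∧
      Function.Surjective φ ∧
      (∀ y, ∃ f : (Subgroup.centralizer {γ} : Subgroup G) ⧸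
            ((Γ ⊓ Subgroup.centralizer {γ}).subgroupOf (Subgroup.centralizer {γ})) →
            {x // φ x = y}, Function.Surjective f) ∧
      (∀ _ : Finite (DoubleCoset.Quotient (K : Set G)
            ((Γ ⊓ Subgroup.centralizer {γ} : Subgroup G) : Set G)),
        Nat.card {x : DoubleCoset.Quotient (K : Set G)
            ((Γ ⊓ Subgroup.centralizer {γ} : Subgroup G) : Set G) //
            ∃ g : G, DoubleCoset.mk K (Γ ⊓ Subgroup.centralizer {γ}) g = x ∧ g * γ * g⁻¹ ∈ S}
          = ∑ᶠ y ∈ {y : DoubleCoset.Quotient (K : Set G)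
              ((Subgroup.centralizer {γ} : Subgroup G) : Set G) |
              ∃ g : G, DoubleCoset.mk K (Subgroup.centralizer {γ}) g = y ∧ g * γ * g⁻¹ ∈ S},
              Nat.card {x // φ x = y}) :=
  stmt8_general K Γ γ S hS
end

section
/- Let N ∈ ℕ and let T: A⁻ → End(ℂ^N) be a semigroup homomorphism from a commutative semigroup A⁻ into commuting endomorphisms of a finite-dimensional complex vector space. Then there exist functions η₁,…,η_N: A⁻ → ℂ, each multiplicative (η_j(ab) = η_j(a)η_j(b)), such that tr T(a) = Σ_{j=1}^N η_j(a) for all a ∈ A⁻. -/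
/-!
Since the `T a` commute, `ℂ^N` is the direct sum of the joint generalized eigenspaces
`W χ = ⨅ a, maxGenEigenspace (T a) (χ a)`, one for each `χ : A → ℂ` with `W χ ≠ ⊥`, and
`T a - χ a` is nilpotent on `W χ`. Hence `tr T(a) = ∑ χ, dim (W χ) * χ a`, and listing every
such `χ` with multiplicity `dim (W χ)` gives the `η_j`. Each of these `χ` is multiplicative:
computing the trace of `T(ab) = T(a) T(b)` on `W χ` in two ways gives
`χ (a * b) * dim (W χ) = χ a * χ b * dim (W χ)`, and `dim (W χ) ≠ 0` in characteristic zero.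
-/

open Module LinearMap Set

theorem Fintype.exists_fin_sum_comp_eq_sum_nsmul {κ β : Type*} [Fintype κ] [AddCommMonoid β]
    (n : κ → ℕ) {N : ℕ} (hN : ∑ k, n k = N) (w : κ → β) :
    ∃ e : Fin N → κ, ∑ j, w (e j) = ∑ k, n k • w k := by
  have hcard : Fintype.card (Σ k, Fin (n k)) = N := by simp [hN]
  refine ⟨fun j => ((Fintype.equivFinOfCardEq hcard).symm j).1, ?_⟩
  rw [Equiv.sum_comp (Fintype.equivFinOfCardEq hcard).symm (fun q => w q.1)]
  simp [← Finset.univ_sigma_univ, Finset.sum_sigma]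

theorem DirectSum.IsInternal.sum_finrank_eq {K V κ : Type*} [Field K] [AddCommGroup V]
    [Module K V] [FiniteDimensional K V] [Fintype κ] [DecidableEq κ] {N : κ → Submodule K V}
    (h : DirectSum.IsInternal N) : ∑ k, finrank K (N k) = finrank K V := by
  rw [finrank_eq_card_basis (h.collectedBasis fun k => finBasis K (N k))]
  simp

namespace Module.End

variable {K V ι : Type*} [Field K] [AddCommGroup V] [Module K V]

theorem isNilpotent_restrict_sub_algebraMap_of_le_maxGenEigenspace [FiniteDimensional K V]
    {g : End K V} {μ : K} {p : Submodule K V} (hp : p ≤ g.maxGenEigenspace μ) (hg : MapsTo g p p) :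
    IsNilpotent (g.restrict hg - algebraMap K (End K p) μ) := by
  have hμ : MapsTo (algebraMap K (End K V) μ) p p := fun _ hx => p.smul_mem μ hx
  rw [show algebraMap K (End K p) μ = (algebraMap K (End K V) μ).restrict hμ from rfl,
    restrict_sub]
  exact isNilpotent_restrict_of_le hp (g.isNilpotent_restrict_maxGenEigenspace_sub_algebraMap μ)

theorem trace_eq_mul_finrank_of_isNilpotent_sub_algebraMap [FiniteDimensional K V] {g : End K V}
    {μ : K} (hg : IsNilpotent (g - algebraMap K (End K V) μ)) :
    trace K V g = μ * finrank K V := by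
  simpa [← mul_eq_comp] using trace_comp_eq_mul_of_commute_of_isNilpotent μ (Commute.one_left _) hg

def jointMaxGenEigenspace (f : ι → End K V) (χ : ι → K) : Submodule K V :=
  ⨅ i, (f i).maxGenEigenspace (χ i)

theorem mapsTo_jointMaxGenEigenspace {f : ι → End K V} (hf : ∀ i j, Commute (f i) (f j))
    (i : ι) (χ : ι → K) :
    MapsTo (f i) (jointMaxGenEigenspace f χ) (jointMaxGenEigenspace f χ) := by
  intro x hx
  simp only [jointMaxGenEigenspace, SetLike.mem_coe, Submodule.mem_iInf] at hx ⊢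
  exact fun j => mapsTo_maxGenEigenspace_of_comm (hf j i) (χ j) (hx j)

theorem isNilpotent_restrict_jointMaxGenEigenspace_sub_algebraMap [FiniteDimensional K V]
    {f : ι → End K V} (hf : ∀ i j, Commute (f i) (f j)) (i : ι) (χ : ι → K) :
    IsNilpotent ((f i).restrict (mapsTo_jointMaxGenEigenspace hf i χ) - algebraMap K _ (χ i)) :=
  isNilpotent_restrict_sub_algebraMap_of_le_maxGenEigenspace
    (iInf_le (fun j => (f j).maxGenEigenspace (χ j)) i) _

theorem trace_restrict_jointMaxGenEigenspace [FiniteDimensional K V] {f : ι → End K V}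
    (hf : ∀ i j, Commute (f i) (f j)) (i : ι) (χ : ι → K) :
    trace K _ ((f i).restrict (mapsTo_jointMaxGenEigenspace hf i χ)) =
      χ i * finrank K (jointMaxGenEigenspace f χ) :=
  trace_eq_mul_finrank_of_isNilpotent_sub_algebraMap
    (isNilpotent_restrict_jointMaxGenEigenspace_sub_algebraMap hf i χ)

theorem iSupIndep_jointMaxGenEigenspace {f : ι → End K V} (hf : ∀ i j, Commute (f i) (f j)) :
    iSupIndep (jointMaxGenEigenspace f) :=
  independent_iInf_maxGenEigenspace_of_forall_mapsTo f
    fun i j => mapsTo_maxGenEigenspace_of_comm (hf j i)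

open Classical in
theorem isInternal_jointMaxGenEigenspace [IsAlgClosed K] [FiniteDimensional K V]
    {f : ι → End K V} (hf : ∀ i j, Commute (f i) (f j)) :
    DirectSum.IsInternal fun χ : {χ // jointMaxGenEigenspace f χ ≠ ⊥} =>
      jointMaxGenEigenspace f χ :=
  DirectSum.isInternal_ne_bot_iff.mpr <|
    DirectSum.isInternal_submodule_of_iSupIndep_of_iSup_eq_top
      (iSupIndep_jointMaxGenEigenspace hf) <|
      iSup_iInf_maxGenEigenspace_eq_top_of_iSup_maxGenEigenspace_eq_top_of_commute f
        (fun i j _ => hf i j) fun i => iSup_maxGenEigenspace_eq_top (f i)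

theorem exists_trace_eq_sum_of_commute [IsAlgClosed K] [FiniteDimensional K V] {f : ι → End K V}
    (hf : ∀ i j, Commute (f i) (f j)) {N : ℕ} (hN : finrank K V = N) :
    ∃ χ : Fin N → ι → K, (∀ j, jointMaxGenEigenspace f (χ j) ≠ ⊥) ∧
      ∀ i, trace K V (f i) = ∑ j, χ j i := by
  classical
  have : Fintype {χ // jointMaxGenEigenspace f χ ≠ ⊥} :=
    (WellFoundedGT.finite_ne_bot_of_iSupIndep (iSupIndep_jointMaxGenEigenspace hf)).fintype
  have hW := isInternal_jointMaxGenEigenspace hf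
  obtain ⟨e, he⟩ := Fintype.exists_fin_sum_comp_eq_sum_nsmul _ (hW.sum_finrank_eq.trans hN)
    (fun χ => χ.1)
  refine ⟨fun j => (e j).1, fun j => (e j).2, fun i => ?_⟩
  rw [trace_eq_sum_trace_restrict hW fun χ => mapsTo_jointMaxGenEigenspace hf i χ.1]
  simpa [trace_restrict_jointMaxGenEigenspace hf i, mul_comm] using (congrFun he i).symm

theorem map_mul_of_jointMaxGenEigenspace_ne_bot [CharZero K] [FiniteDimensional K V]
    {A : Type*} [CommSemigroup A] (f : A →ₙ* End K V) {χ : A → K}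
    (hχ : jointMaxGenEigenspace f χ ≠ ⊥) (a b : A) : χ (a * b) = χ a * χ b := by
  have hf : ∀ a b, Commute (f a) (f b) := fun a b => (Commute.all a b).map f
  have : Nontrivial (jointMaxGenEigenspace f χ) := Submodule.nontrivial_iff_ne_bot.mpr hχ
  have hrank : (finrank K (jointMaxGenEigenspace f χ) : K) ≠ 0 := by
    exact_mod_cast finrank_pos.ne'
  refine mul_right_cancel₀ hrank ?_
  calc χ (a * b) * finrank K (jointMaxGenEigenspace f χ)
      = trace K _ ((f (a * b)).restrict (mapsTo_jointMaxGenEigenspace hf (a * b) χ)) :=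
        (trace_restrict_jointMaxGenEigenspace hf (a * b) χ).symm
    _ = trace K _ ((f a).restrict (mapsTo_jointMaxGenEigenspace hf a χ) ∘ₗ
          (f b).restrict (mapsTo_jointMaxGenEigenspace hf b χ)) := by
        simp only [map_mul]; rfl
    _ = χ b * (χ a * finrank K (jointMaxGenEigenspace f χ)) := by
        rw [trace_comp_eq_mul_of_commute_of_isNilpotent _ (restrict_commute (hf a b) _ _)
          (isNilpotent_restrict_jointMaxGenEigenspace_sub_algebraMap hf b χ),
          trace_restrict_jointMaxGenEigenspace hf a χ]
    _ = χ a * χ b * finrank K (jointMaxGenEigenspace f χ) := by ring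

end Module.End

/-- Let `T : A⁻ → End(ℂ^N)` be a semigroup homomorphism from a commutative
semigroup `A⁻` into (automatically commuting) endomorphisms of `ℂ^N`.  Then
there exist multiplicative functions `η₁, …, η_N : A⁻ → ℂ` such that
`tr T(a) = Σ_j η_j(a)` for all `a ∈ A⁻`. -/
theorem stmt10 (N : ℕ) {A : Type*} [CommSemigroup A]
    (T : A → Matrix (Fin N) (Fin N) ℂ)
    (hT : ∀ a b : A, T (a * b) = T a * T b) :
    ∃ η : Fin N → A → ℂ,
      (∀ j, ∀ a b : A, η j (a * b) = η j a * η j b) ∧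
      ∀ a : A, (T a).trace = ∑ j, η j a := by
  let f : A →ₙ* Module.End ℂ (Fin N → ℂ) :=
    (Matrix.toLinAlgEquiv' : Matrix (Fin N) (Fin N) ℂ ≃ₐ[ℂ] _).toMulHom.comp ⟨T, hT⟩
  obtain ⟨η, hη, htrace⟩ := Module.End.exists_trace_eq_sum_of_commute
    (fun a b => (Commute.all a b).map f) (finrank_fin_fun ℂ)
  exact ⟨η, fun j => Module.End.map_mul_of_jointMaxGenEigenspace_ne_bot f (hη j),
    fun a => (Matrix.trace_toLin'_eq (T a)).symm.trans (htrace a)⟩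
end

section
/- Let Λ = ⊕_{j=1}^d ℤ e_j with the translation operators T_k (k ∈ ℕ₀^d(Λ₀)) on a module satisfying T_k T_l = T_{k+l}. Then the formal power series T(u) = Σ_{k ∈ ℕ^d(Λ₀)} u^k T_k is rational: there exist a finite set E ⊆ ℕ₀^d and k⁽¹⁾,…,k⁽ᵈ⁾ ∈ ℕ₀^d such that T(u)·∏_{i=1}^d (1 − T_{k⁽ⁱ⁾} u^{k⁽ⁱ⁾}) = Σ_{e ∈ E} u^{k(e)} T_{k(e)} as formal power series. -/
/-!
Let `N = [ℤ^d : Λ₀]`, so that `N eᵢ ∈ Λ₀` for every `i`. Since `T_{k + N eᵢ} = T_k T_{N eᵢ}`,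
multiplying a series `Σ_{k ∈ s} T_k u^k` by `1 - T_{N eᵢ} u^{N eᵢ}` deletes exactly the
translates `N eᵢ + s` from its support. The positive lattice points whose `i`-th coordinate
exceeds `N` are precisely such translates, so after treating every coordinate what is left is
`Σ_{e ∈ E} T_e u^e`, with `E` the positive lattice points of the box `[1, N]^d`.
-/

open scoped Classical

open MvPowerSeries

namespace MvPowerSeries

variable {σ R : Type*} [CommRing R]

theorem coeff_mul_one_sub_monomial (F : MvPowerSeries σ R) (m n : σ →₀ ℕ) (c : R) :
    coeff m (F * (1 - monomial n c)) =
      coeff m F - if n ≤ m then coeff (m - n) F * c else 0 := by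
  rw [mul_sub, mul_one, map_sub, coeff_mul_monomial]

theorem coeff_sum_monomial (E : Finset (σ →₀ ℕ)) (T : (σ →₀ ℕ) → R) (m : σ →₀ ℕ) :
    coeff m (∑ e ∈ E, monomial e (T e)) = if m ∈ E then T m else 0 := by
  simp [coeff_monomial]

theorem coeff_mul_one_sub_monomial_of_eq_union {F : MvPowerSeries σ R} {T : (σ →₀ ℕ) → R}
    {s s' : Set (σ →₀ ℕ)} {n : σ →₀ ℕ} {c : R}
    (hF : ∀ m, coeff m F = if m ∈ s then T m else 0)
    (hs : s = s' ∪ (· + n) '' s) (hdisj : Disjoint s' ((· + n) '' s))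
    (hT : ∀ k ∈ s, T (k + n) = T k * c) (m : σ →₀ ℕ) :
    coeff m (F * (1 - monomial n c)) = if m ∈ s' then T m else 0 := by
  rw [coeff_mul_one_sub_monomial, hF]
  by_cases himage : m ∈ (· + n) '' s
  · obtain ⟨k, hk, rfl⟩ := himage
    have hks : k + n ∈ s := hs ▸ Or.inr ⟨k, hk, rfl⟩
    have hks' : k + n ∉ s' := Set.disjoint_right.mp hdisj ⟨k, hk, rfl⟩
    simp [hks, hks', hF, hk, hT k hk]
  · have hm : m ∈ s ↔ m ∈ s' := by
      conv_lhs => rw [hs]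
      simp [himage]
    have hsub : n ≤ m → m - n ∉ s := fun hnm hmn =>
      himage ⟨m - n, hmn, tsub_add_cancel_of_le hnm⟩
    by_cases hnm : n ≤ m <;> simp [hm, hnm, hF, hsub]

end MvPowerSeries

section LatticePoints

variable {σ : Type*}

def latticePoints (Λ₀ : AddSubgroup (σ → ℤ)) : AddSubmonoid (σ →₀ ℕ) where
  carrier := {k | (fun j => (k j : ℤ)) ∈ Λ₀}
  add_mem' {k l} hk hl := by simpa [Pi.add_def] using Λ₀.add_mem hk hl
  zero_mem' := by simpa [Pi.zero_def] using Λ₀.zero_mem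

variable {Λ₀ : AddSubgroup (σ → ℤ)}

theorem tsub_mem_latticePoints {m n : σ →₀ ℕ} (hnm : n ≤ m) (hn : n ∈ latticePoints Λ₀)
    (hm : m ∈ latticePoints Λ₀) : m - n ∈ latticePoints Λ₀ := by
  have hsum : (fun j => ((m - n) j : ℤ)) + (fun j => (n j : ℤ)) = fun j => (m j : ℤ) := by
    ext j
    simp [Nat.cast_sub (Finsupp.le_def.mp hnm j)]
  show (fun j => ((m - n) j : ℤ)) ∈ Λ₀
  exact (Λ₀.add_mem_cancel_right hn).mp (hsum ▸ hm)

theorem single_index_mem_latticePoints (Λ₀ : AddSubgroup (σ → ℤ)) (a : σ) :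
    Finsupp.single a Λ₀.index ∈ latticePoints Λ₀ := by
  have hsingle : (fun j => (Finsupp.single a Λ₀.index j : ℤ)) =
      Λ₀.index • fun j => (Finsupp.single a 1 j : ℤ) := by
    ext j
    by_cases h : a = j <;> simp [Finsupp.single_apply, h]
  show (fun j => (Finsupp.single a Λ₀.index j : ℤ)) ∈ Λ₀
  exact hsingle ▸ Λ₀.nsmul_index_mem _

def positiveLatticeBox (Λ₀ : AddSubgroup (σ → ℤ)) (N : ℕ) (I : Finset σ) : Set (σ →₀ ℕ) :=
  {m | (∀ j, 1 ≤ m j) ∧ m ∈ latticePoints Λ₀ ∧ ∀ i ∈ I, m i ≤ N}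

theorem positiveLatticeBox_eq_insert_union_image {N : ℕ} {I : Finset σ} {a : σ} (ha : a ∉ I)
    (hN : Finsupp.single a N ∈ latticePoints Λ₀) :
    positiveLatticeBox Λ₀ N I =
      positiveLatticeBox Λ₀ N (insert a I) ∪
        (· + Finsupp.single a N) '' positiveLatticeBox Λ₀ N I := by
  have hne : ∀ i ∈ I, a ≠ i := fun i hi hai => ha (hai ▸ hi)
  ext m
  simp only [Set.mem_union, Set.mem_image]
  constructor
  · rintro ⟨hpos, hmem, hle⟩
    by_cases hma : m a ≤ N
    · exact Or.inl ⟨hpos, hmem, (Finset.forall_mem_insert _ _ _).mpr ⟨hma, hle⟩⟩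
    · have hsingle : Finsupp.single a N ≤ m := Finsupp.single_le_iff.mpr (by omega)
      refine Or.inr ⟨m - Finsupp.single a N, ⟨fun j => ?_, tsub_mem_latticePoints hsingle hN hmem,
        fun i hi => ?_⟩, tsub_add_cancel_of_le hsingle⟩
      · by_cases h : a = j
        · subst h
          simp only [Finsupp.tsub_apply, Finsupp.single_eq_same]
          omega
        · simpa [Finsupp.single_apply, h] using hpos j
      · simpa [Finsupp.single_apply, hne i hi] using hle i hi
  · rintro (⟨hpos, hmem, hle⟩ | ⟨k, ⟨hpos, hmem, hle⟩, rfl⟩)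
    · exact ⟨hpos, hmem, fun i hi => hle i (Finset.mem_insert_of_mem hi)⟩
    · refine ⟨fun j => (hpos j).trans (by simp), add_mem hmem hN, fun i hi => ?_⟩
      simpa [Finsupp.single_apply, hne i hi] using hle i hi

theorem disjoint_positiveLatticeBox_insert_image (N : ℕ) (I : Finset σ) (a : σ) :
    Disjoint (positiveLatticeBox Λ₀ N (insert a I))
      ((· + Finsupp.single a N) '' positiveLatticeBox Λ₀ N I) := by
  rintro s hbox himage m hm
  obtain ⟨k, ⟨hpos, -, -⟩, rfl⟩ := himage hm
  have hle := (hbox hm).2.2 a (Finset.mem_insert_self a I)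
  simp only [Finsupp.add_apply, Finsupp.single_eq_same] at hle
  linarith [hpos a]

theorem finite_positiveLatticeBox_univ [Fintype σ] (N : ℕ) :
    (positiveLatticeBox Λ₀ N Finset.univ).Finite :=
  (Set.finite_Iic (Finsupp.equivFunOnFinite.symm fun _ => N)).subset
    fun _ hm => Finsupp.le_def.mpr fun i => hm.2.2 i (Finset.mem_univ i)

theorem coeff_mul_prod_one_sub_monomial_single {R : Type*} [CommRing R]
    {T : (σ →₀ ℕ) → R}
    (hT : ∀ k l, k ∈ latticePoints Λ₀ → l ∈ latticePoints Λ₀ → T (k + l) = T k * T l)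
    {Tu : MvPowerSeries σ R}
    (hTu : ∀ k, coeff k Tu = if (∀ j, 1 ≤ k j) ∧ k ∈ latticePoints Λ₀ then T k else 0)
    {N : ℕ} (hN : ∀ i, Finsupp.single i N ∈ latticePoints Λ₀) (I : Finset σ) (m : σ →₀ ℕ) :
    coeff m (Tu * ∏ i ∈ I, (1 - monomial (Finsupp.single i N) (T (Finsupp.single i N)))) =
      if m ∈ positiveLatticeBox Λ₀ N I then T m else 0 := by
  induction I using Finset.induction_on generalizing m with
  | empty => simp [positiveLatticeBox, hTu]
  | @insert a I ha ih =>
    rw [Finset.prod_insert ha, mul_left_comm, mul_comm]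
    exact coeff_mul_one_sub_monomial_of_eq_union ih
      (positiveLatticeBox_eq_insert_union_image ha (hN a))
      (disjoint_positiveLatticeBox_insert_image N I a) (fun k hk => hT k _ hk.2.1 (hN a)) m

end LatticePoints

theorem stmt17_general (d : ℕ) {R : Type*} [CommRing R]
    (Λ₀ : AddSubgroup (Fin d → ℤ))
    (T : (Fin d →₀ ℕ) → R)
    (hT : ∀ k l : Fin d →₀ ℕ, ((fun j => (k j : ℤ)) ∈ Λ₀) →
      ((fun j => (l j : ℤ)) ∈ Λ₀) → T (k + l) = T k * T l)
    (Tu : MvPowerSeries (Fin d) R)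
    (hTu : ∀ k : Fin d →₀ ℕ, MvPowerSeries.coeff k Tu
      = if (∀ j, 1 ≤ k j) ∧ ((fun j => (k j : ℤ)) ∈ Λ₀) then T k else 0) :
    ∃ (E : Finset (Fin d →₀ ℕ)) (kk : Fin d → (Fin d →₀ ℕ)),
      (∀ e ∈ E, (fun j => (e j : ℤ)) ∈ Λ₀) ∧
      (∀ i, (fun j => ((kk i) j : ℤ)) ∈ Λ₀) ∧
      Tu * ∏ i, (1 - MvPowerSeries.monomial (kk i) (T (kk i)))
        = ∑ e ∈ E, MvPowerSeries.monomial e (T e) := by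
  have hN : ∀ i, Finsupp.single i Λ₀.index ∈ latticePoints Λ₀ :=
    single_index_mem_latticePoints Λ₀
  have hE := finite_positiveLatticeBox_univ (Λ₀ := Λ₀) Λ₀.index
  refine ⟨hE.toFinset, fun i => Finsupp.single i Λ₀.index,
    fun e he => (hE.mem_toFinset.mp he).2.1, hN, ?_⟩
  ext m
  beta_reduce
  rw [coeff_mul_prod_one_sub_monomial_single hT (fun k => by rw [hTu k]; congr) hN,
    coeff_sum_monomial]
  simp only [hE.mem_toFinset]

/-- Rationality of the generating series of the translation operators.  Let
`Λ₀` be a finite index sublattice of `ℤ^d` and let `T` be a multiplicative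
family of "translation operators" indexed by the lattice points
`k ∈ ℕ₀^d(Λ₀)` (i.e. `T_k T_l = T_{k+l}`), with values in a commutative ring.
Then the formal power series `T(u) = Σ_{k ∈ ℕ^d(Λ₀)} u^k T_k` is rational:
there exist a finite set `E` and `k⁽¹⁾, …, k⁽ᵈ⁾ ∈ ℕ₀^d(Λ₀)` with
`T(u) · ∏ᵢ (1 − T_{k⁽ⁱ⁾} u^{k⁽ⁱ⁾}) = Σ_{e ∈ E} u^e T_e`. -/
theorem stmt17 (d : ℕ) {R : Type*} [CommRing R]
    (Λ₀ : AddSubgroup (Fin d → ℤ)) [Λ₀.FiniteIndex]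
    (T : (Fin d →₀ ℕ) → R)
    (hT : ∀ k l : Fin d →₀ ℕ, ((fun j => (k j : ℤ)) ∈ Λ₀) →
      ((fun j => (l j : ℤ)) ∈ Λ₀) → T (k + l) = T k * T l)
    (Tu : MvPowerSeries (Fin d) R)
    (hTu : ∀ k : Fin d →₀ ℕ, MvPowerSeries.coeff k Tu
      = if (∀ j, 1 ≤ k j) ∧ ((fun j => (k j : ℤ)) ∈ Λ₀) then T k else 0) :
    ∃ (E : Finset (Fin d →₀ ℕ)) (kk : Fin d → (Fin d →₀ ℕ)),
      (∀ e ∈ E, (fun j => (e j : ℤ)) ∈ Λ₀) ∧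
      (∀ i, (fun j => ((kk i) j : ℤ)) ∈ Λ₀) ∧
      Tu * ∏ i, (1 - MvPowerSeries.monomial (kk i) (T (kk i)))
        = ∑ e ∈ E, MvPowerSeries.monomial e (T e) :=
  stmt17_general d Λ₀ T hT Tu hTu
end
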